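/- Suppose P_1 is a probability distribution on {0,1}^n with E[-log_2 P_1(X)] <= n + eps for X uniform, P_2(.;x) is for each x a conditional distribution with E[-log_2 P_2(f(X); X)] <= eps, f is a bijection with E[-log_2 P_2(f(X))] >= n (where P_2(.) is any distribution on outputs), and E[-log_2 P_1(X; f(X))] > c log_2 n for conditional model P_1(.;.). Then there exists x in {0,1}^n with P_1(x) P_2(f(x); x) > n^c 2^{-2 eps} P_2(f(x)) P_1(x; f(x)). -/
import Mathlib


/-- With `X` uniform on `{0,1}^n` and `f` a bijection, suppose
`E[-log₂ P₁(X)] ≤ n + ε`, `E[-log₂ P₂(f(X); X)] ≤ ε`, `E[-log₂ P₂(f(X))] ≥ n`, and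
`E[-log₂ P₁(X; f(X))] > c·log₂ n`. Then there exists `x` with
`P₁(x)·P₂(f(x); x) > n^c · 2^{-2ε} · P₂(f(x)) · P₁(x; f(x))`.
Here `P2cond y x` denotes `P₂(y; x)` and `P1cond x y` denotes `P₁(x; y)`. -/
theorem bayes_violation (n : ℕ) (eps c : ℝ)
    (f : Equiv.Perm (Fin n → Bool))
    (P1 : (Fin n → Bool) → ℝ)
    (P2cond : (Fin n → Bool) → (Fin n → Bool) → ℝ)
    (P2 : (Fin n → Bool) → ℝ)
    (P1cond : (Fin n → Bool) → (Fin n → Bool) → ℝ)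
    (hP1pos : ∀ x, 0 < P1 x)
    (hP2cpos : ∀ x, 0 < P2cond (f x) x)
    (hP2pos : ∀ x, 0 < P2 (f x))
    (hP1cpos : ∀ x, 0 < P1cond x (f x))
    (h1 : (∑ x, -Real.logb 2 (P1 x)) / 2 ^ n ≤ (n : ℝ) + eps)
    (h2 : (∑ x, -Real.logb 2 (P2cond (f x) x)) / 2 ^ n ≤ eps)
    (h3 : (n : ℝ) ≤ (∑ x, -Real.logb 2 (P2 (f x))) / 2 ^ n)
    (h4 : c * Real.logb 2 n < (∑ x, -Real.logb 2 (P1cond x (f x))) / 2 ^ n) :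
    ∃ x : Fin n → Bool,
      (n : ℝ) ^ c * (2 : ℝ) ^ (-(2 * eps)) * (P2 (f x) * P1cond x (f x))
        < P1 x * P2cond (f x) x := by
  have hN : (0 : ℝ) < 2 ^ n := by positivity
  rw [div_le_iff₀ hN] at h1 h2
  rw [le_div_iff₀ hN] at h3
  rw [lt_div_iff₀ hN] at h4
  set g : (Fin n → Bool) → ℝ := fun x =>
    Real.logb 2 (P1 x) + Real.logb 2 (P2cond (f x) x)
      - Real.logb 2 (P2 (f x)) - Real.logb 2 (P1cond x (f x)) with hg
  have hcard : (Fintype.card (Fin n → Bool) : ℝ) = 2 ^ n := by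
    simp [Fintype.card_fun]
  have hsum : ∑ x, (fun _ : Fin n → Bool => c * Real.logb 2 n - 2 * eps) x < ∑ x, g x := by
    have hsg : ∑ x, g x
        = -(∑ x, -Real.logb 2 (P1 x)) - (∑ x, -Real.logb 2 (P2cond (f x) x))
          + (∑ x, -Real.logb 2 (P2 (f x))) + (∑ x, -Real.logb 2 (P1cond x (f x))) := by
      simp only [hg, sub_eq_add_neg, Finset.sum_add_distrib, Finset.sum_neg_distrib]
      ring
    have hconst : ∑ x, (fun _ : Fin n → Bool => c * Real.logb 2 n - 2 * eps) x
        = (c * Real.logb 2 n - 2 * eps) * 2 ^ n := by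
      rw [Finset.sum_const, Finset.card_univ, nsmul_eq_mul, hcard, mul_comm]
    rw [hconst, hsg]
    nlinarith [h1, h2, h3, h4]
  obtain ⟨x, -, hx⟩ := Finset.exists_lt_of_sum_lt hsum
  refine ⟨x, ?_⟩
  have hA := hP1pos x
  have hB := hP2cpos x
  have hC := hP2pos x
  have hD := hP1cpos x
  have hlog : c * Real.logb 2 n - 2 * eps + Real.logb 2 (P2 (f x) * P1cond x (f x))
      < Real.logb 2 (P1 x * P2cond (f x) x) := by
    rw [Real.logb_mul (ne_of_gt hC) (ne_of_gt hD),
        Real.logb_mul (ne_of_gt hA) (ne_of_gt hB)]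
    simp only [hg] at hx
    linarith
  have key : (2 : ℝ) ^ (c * Real.logb 2 n - 2 * eps) * (P2 (f x) * P1cond x (f x))
      < P1 x * P2cond (f x) x := by
    have h2' : (2 : ℝ) ^ (c * Real.logb 2 n - 2 * eps + Real.logb 2 (P2 (f x) * P1cond x (f x)))
        < (2 : ℝ) ^ Real.logb 2 (P1 x * P2cond (f x) x) :=
      Real.rpow_lt_rpow_left_iff (by norm_num : (1:ℝ) < 2) |>.2 hlog
    rwa [Real.rpow_add (by norm_num), Real.rpow_logb (by norm_num) (by norm_num)
          (by positivity), Real.rpow_logb (by norm_num) (by norm_num) (by positivity)] at h2'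
  have hnc : (n : ℝ) ^ c * (2 : ℝ) ^ (-(2 * eps))
      ≤ (2 : ℝ) ^ (c * Real.logb 2 n - 2 * eps) := by
    rw [sub_eq_add_neg, Real.rpow_add (by norm_num)]
    gcongr ?_ * _
    rcases Nat.eq_zero_or_pos n with hn | hn
    · subst hn
      rcases eq_or_ne c 0 with hc | hc
      · simp [hc]
      · rw [Nat.cast_zero, Real.zero_rpow hc]
        positivity
    · have hn' : (0 : ℝ) < n := by exact_mod_cast hn
      have heq : (2:ℝ) ^ (c * Real.logb 2 (n:ℝ)) = (n:ℝ) ^ c := by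
        rw [mul_comm, Real.rpow_mul (by norm_num : (0:ℝ) ≤ 2),
          Real.rpow_logb (by norm_num) (by norm_num) hn']
      exact heq.ge
  calc (n : ℝ) ^ c * (2 : ℝ) ^ (-(2 * eps)) * (P2 (f x) * P1cond x (f x))
      ≤ (2 : ℝ) ^ (c * Real.logb 2 n - 2 * eps) * (P2 (f x) * P1cond x (f x)) := by
        exact mul_le_mul_of_nonneg_right hnc (by positivity)
    _ < P1 x * P2cond (f x) x := key
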